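/- arXiv:2602.17543 — 5 statements merged into one kernel-verified Lean document; each statement's English description precedes it below -/
import Mathlib

section
/- Let n, p be positive natural numbers, let φ : Fin n → Fin p → ℝ and m : Fin n → Fin p → ℝ be given arrays, and for each i let hᵢ : ℝ → ℝ be convex and differentiable. Fix λ ≥ 0 and define the ℓ¹-penalized generalized Riesz regression objective L(β) = (1/n)·Σᵢ ( hᵢ(Σⱼ φᵢⱼ βⱼ) − Σⱼ mᵢⱼ βⱼ ) + λ·Σⱼ |βⱼ| for β ∈ ℝᵖ. If β̂ is a global minimizer of L and α̂ᵢ = hᵢ'(Σⱼ φᵢⱼ β̂ⱼ), then for every j, | (1/n)·Σᵢ ( α̂ᵢ φᵢⱼ − mᵢⱼ ) | ≤ λ. (Automatic regressor balancing with ℓ¹ penalty: the maximum absolute sample moment imbalance over the basis functions is bounded by the regularization parameter λ.) -/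
/-!
Moving `β̂` by `t` along the `j`-th coordinate changes the `ℓ¹` penalty by at most `λ|t|`, so
minimality gives `F 0 ≤ F t + λ|t|` for the smooth part `F` of the objective on that line. Its
one-sided difference quotients at `0` are then squeezed into `[-λ, λ]`, and by the chain rule
`F'(0)` is the sample imbalance `(1/n) Σᵢ (α̂ᵢ φᵢⱼ - mᵢⱼ)`.
-/

open Filter Finset

theorem abs_le_of_hasDerivAt_of_forall_le_add_abs {f : ℝ → ℝ} {f' x c : ℝ}
    (hf : HasDerivAt f f' x) (hx : ∀ y, f x ≤ f y + c * |y - x|) : |f'| ≤ c := by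
  obtain ⟨hleft, hright⟩ := hasDerivAt_iff_tendsto_slope_left_right.mp hf
  rw [abs_le]
  constructor
  · refine ge_of_tendsto hright (eventually_nhdsWithin_of_forall fun y (hy : x < y) => ?_)
    have hxy := hx y
    rw [abs_of_pos (sub_pos.mpr hy)] at hxy
    rw [slope_def_field, le_div_iff₀ (sub_pos.mpr hy)]
    linarith
  · refine le_of_tendsto hleft (eventually_nhdsWithin_of_forall fun y (hy : y < x) => ?_)
    have hxy := hx y
    rw [abs_of_neg (sub_neg.mpr hy)] at hxy
    rw [slope_def_field, div_le_iff_of_neg (sub_neg.mpr hy)]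
    linarith

section Coordinate

variable {ι : Type*} [Fintype ι] [DecidableEq ι]

theorem sum_mul_add_single (c β : ι → ℝ) (j : ι) (t : ℝ) :
    ∑ k, c k * (β + Pi.single j t : ι → ℝ) k = ∑ k, c k * β k + c j * t :=
  (dotProduct_add c β (Pi.single j t)).trans (congrArg _ (dotProduct_single c t j))

theorem sum_abs_add_single_le (β : ι → ℝ) (j : ι) (t : ℝ) :
    ∑ k, |(β + Pi.single j t : ι → ℝ) k| ≤ ∑ k, |β k| + |t| :=
  calc ∑ k, |(β + Pi.single j t : ι → ℝ) k|
      ≤ ∑ k, (|β k| + |(Pi.single j t : ι → ℝ) k|) := sum_le_sum fun k _ => abs_add_le _ _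
    _ = ∑ k, |β k| + |t| := by
      rw [sum_add_distrib]
      simp [Pi.single_apply, apply_ite]

theorem abs_le_of_hasDerivAt_coord_of_minimizer_add_l1 {F : (ι → ℝ) → ℝ} {lam : ℝ}
    (hlam : 0 ≤ lam) {β : ι → ℝ}
    (hβ : ∀ γ, F β + lam * ∑ k, |β k| ≤ F γ + lam * ∑ k, |γ k|) (j : ι) {d : ℝ}
    (hd : HasDerivAt (fun t => F (β + Pi.single j t)) d 0) : |d| ≤ lam := by
  refine abs_le_of_hasDerivAt_of_forall_le_add_abs hd fun t => ?_
  have hmin := hβ (β + Pi.single j t)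
  have hpen := mul_le_mul_of_nonneg_left (sum_abs_add_single_le β j t) hlam
  simp only [Pi.single_zero, add_zero, sub_zero]
  linarith

end Coordinate

theorem arb_l1_balancing_general
    (n p : ℕ)
    (φ m : Fin n → Fin p → ℝ)
    (h : Fin n → ℝ → ℝ)
    (hdiff : ∀ i, Differentiable ℝ (h i))
    (lam : ℝ) (hlam : 0 ≤ lam)
    (L : (Fin p → ℝ) → ℝ)
    (hL : ∀ β : Fin p → ℝ,
      L β = (1 / (n : ℝ)) * ∑ i, (h i (∑ j, φ i j * β j) - ∑ j, m i j * β j)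
            + lam * ∑ j, |β j|)
    (βhat : Fin p → ℝ)
    (hmin : ∀ β : Fin p → ℝ, L βhat ≤ L β)
    (αhat : Fin n → ℝ)
    (hαhat : ∀ i, αhat i = deriv (h i) (∑ j, φ i j * βhat j)) :
    ∀ j : Fin p,
      |(1 / (n : ℝ)) * ∑ i, (αhat i * φ i j - m i j)| ≤ lam := by
  intro j
  set F : (Fin p → ℝ) → ℝ := fun β =>
    (1 / (n : ℝ)) * ∑ i, (h i (∑ k, φ i k * β k) - ∑ k, m i k * β k)
  have hline : (fun t => F (βhat + Pi.single j t)) = fun t => (1 / (n : ℝ)) *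
      ∑ i, (h i (∑ k, φ i k * βhat k + φ i j * t) - (∑ k, m i k * βhat k + m i j * t)) := by
    simp only [F, sum_mul_add_single]
  have hderiv : HasDerivAt (fun t => F (βhat + Pi.single j t))
      ((1 / (n : ℝ)) * ∑ i, (αhat i * φ i j - m i j)) 0 := by
    rw [hline]
    refine (HasDerivAt.fun_sum fun i _ => ?_).const_mul _
    have hφ : HasDerivAt (fun t : ℝ => ∑ k, φ i k * βhat k + φ i j * t) (φ i j) 0 := by
      simpa using ((hasDerivAt_id (0 : ℝ)).const_mul (φ i j)).const_add (∑ k, φ i k * βhat k)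
    have hm : HasDerivAt (fun t : ℝ => ∑ k, m i k * βhat k + m i j * t) (m i j) 0 := by
      simpa using ((hasDerivAt_id (0 : ℝ)).const_mul (m i j)).const_add (∑ k, m i k * βhat k)
    rw [hαhat]
    exact ((hdiff i _).hasDerivAt.comp_of_eq 0 hφ (by simp)).sub hm
  refine abs_le_of_hasDerivAt_coord_of_minimizer_add_l1 hlam (fun γ => ?_) j hderiv
  simpa only [hL] using hmin γ

/-- Automatic regressor balancing with ℓ¹ penalty: if `β̂` globally minimizes the
ℓ¹-penalized generalized Riesz regression objective, then for every basis index `j`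
the absolute sample moment imbalance is bounded by `λ`. -/
theorem arb_l1_balancing
    (n p : ℕ) (hn : 0 < n) (hp : 0 < p)
    (φ m : Fin n → Fin p → ℝ)
    (h : Fin n → ℝ → ℝ)
    (hconv : ∀ i, ConvexOn ℝ Set.univ (h i))
    (hdiff : ∀ i, Differentiable ℝ (h i))
    (lam : ℝ) (hlam : 0 ≤ lam)
    (L : (Fin p → ℝ) → ℝ)
    (hL : ∀ β : Fin p → ℝ,
      L β = (1 / (n : ℝ)) * ∑ i, (h i (∑ j, φ i j * β j) - ∑ j, m i j * β j)
            + lam * ∑ j, |β j|)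
    (βhat : Fin p → ℝ)
    (hmin : ∀ β : Fin p → ℝ, L βhat ≤ L β)
    (αhat : Fin n → ℝ)
    (hαhat : ∀ i, αhat i = deriv (h i) (∑ j, φ i j * βhat j)) :
    ∀ j : Fin p,
      |(1 / (n : ℝ)) * ∑ i, (αhat i * φ i j - m i j)| ≤ lam :=
  arb_l1_balancing_general n p φ m h hdiff lam hlam L hL βhat hmin αhat hαhat
end

section
/- Let n, p be positive natural numbers, let φ : Fin n → Fin p → ℝ and m : Fin n → Fin p → ℝ be given arrays, and for each i let hᵢ : ℝ → ℝ be convex and differentiable. Fix λ ≥ 0 and a real q > 1, and define L(β) = (1/n)·Σᵢ ( hᵢ(Σⱼ φᵢⱼ βⱼ) − Σⱼ mᵢⱼ βⱼ ) + (λ/q)·Σⱼ |βⱼ|^q for β ∈ ℝᵖ. If β̂ is a global minimizer of L and α̂ᵢ = hᵢ'(Σⱼ φᵢⱼ β̂ⱼ), then for every j, (1/n)·Σᵢ ( α̂ᵢ φᵢⱼ − mᵢⱼ ) = −λ · sign(β̂ⱼ) · |β̂ⱼ|^{q−1}; in particular | (1/n)·Σᵢ ( α̂ᵢ φᵢⱼ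 − mᵢⱼ ) | = λ · |β̂ⱼ|^{q−1}. -/
/-!
Restrict the objective to the coordinate line `t ↦ L (update β̂ j t)`. Since `β̂` is a global
minimizer, the derivative of this one-variable function vanishes at `t = β̂ⱼ`. For `q > 1` the
penalty `|t| ^ q / q` is differentiable with derivative `sign t * |t| ^ (q - 1)`, and the data term
contributes `(1/n) ∑ᵢ (hᵢ'(φᵢᵀβ̂) φᵢⱼ - mᵢⱼ)`; the first-order condition is the balancing identity.
-/

open Finset Function

theorem hasDerivAt_abs_rpow_sign {q : ℝ} (hq : 1 < q) (t : ℝ) :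
    HasDerivAt (fun s : ℝ => |s| ^ q) (q * Real.sign t * |t| ^ (q - 1)) t := by
  convert hasDerivAt_abs_rpow t hq using 1
  rcases lt_trichotomy t 0 with ht | rfl | ht
  · rw [Real.sign_of_neg ht, abs_of_neg ht, show q - 1 = (q - 2) + 1 by ring,
      Real.rpow_add (by linarith), Real.rpow_one]
    ring
  · simp
  · rw [Real.sign_of_pos ht, abs_of_pos ht, show q - 1 = (q - 2) + 1 by ring,
      Real.rpow_add ht, Real.rpow_one]
    ring

theorem abs_sign_mul_abs_rpow {r : ℝ} (hr : r ≠ 0) (t : ℝ) :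
    |Real.sign t * |t| ^ r| = |t| ^ r := by
  rcases lt_trichotomy t 0 with ht | rfl | ht
  · simp [Real.sign_of_neg ht, Real.rpow_nonneg]
  · simp [Real.zero_rpow hr]
  · simp [Real.sign_of_pos ht, Real.rpow_nonneg]

section Update

variable {ι 𝕜 F : Type*} [Fintype ι] [DecidableEq ι] [NontriviallyNormedField 𝕜]
  [NormedAddCommGroup F] [NormedSpace 𝕜 F]

theorem hasDerivAt_sum_comp_update (g : ι → 𝕜 → F) (x : ι → 𝕜) (j : ι) {d : F} {t : 𝕜}
    (hg : HasDerivAt (g j) d t) :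
    HasDerivAt (fun s => ∑ k, g k (update x j s k)) d t := by
  have hterm : ∀ k, HasDerivAt (fun s => g k (update x j s k)) ((Pi.single j d : ι → F) k) t := by
    intro k
    by_cases hk : k = j
    · subst hk
      simpa using hg
    · simpa [update_of_ne hk, Pi.single_eq_of_ne hk] using hasDerivAt_const t (g k (x k))
  simpa using HasDerivAt.fun_sum (u := univ) fun k _ => hterm k

end Update

theorem hasDerivAt_update_eq_zero_of_forall_le {ι : Type*} [DecidableEq ι] {f : (ι → ℝ) → ℝ}
    {x : ι → ℝ} {j : ι} {d : ℝ} (hmin : ∀ y, f x ≤ f y)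
    (hd : HasDerivAt (fun t => f (update x j t)) d (x j)) : d = 0 :=
  IsLocalMin.hasDerivAt_eq_zero (Filter.Eventually.of_forall fun t => by
    simpa using hmin (update x j t)) hd

theorem hasDerivAt_sum_sub_sum_update {ι κ : Type*} [Fintype ι] [Fintype κ] [DecidableEq κ]
    (h : ι → ℝ → ℝ) (φ m : ι → κ → ℝ) (β : κ → ℝ) (j : κ)
    (hdiff : ∀ i, DifferentiableAt ℝ (h i) (∑ k, φ i k * β k)) :
    HasDerivAt (fun t => ∑ i, (h i (∑ k, φ i k * update β j t k) - ∑ k, m i k * update β j t k))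
      (∑ i, (deriv (h i) (∑ k, φ i k * β k) * φ i j - m i j)) (β j) := by
  have hlin (c : κ → ℝ) : HasDerivAt (fun t => ∑ k, c k * update β j t k) (c j) (β j) :=
    hasDerivAt_sum_comp_update (fun k s => c k * s) β j
      (by simpa using (hasDerivAt_id (β j)).const_mul (c j))
  refine HasDerivAt.fun_sum fun i _ => ?_
  have hh : HasDerivAt (h i) (deriv (h i) (∑ k, φ i k * β k))
      (∑ k, φ i k * update β j (β j) k) := by
    simpa using (hdiff i).hasDerivAt
  exact (hh.comp (β j) (hlin (φ i))).sub (hlin (m i))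

theorem arb_lq_balancing_general
    (n p : ℕ)
    (φ m : Fin n → Fin p → ℝ)
    (h : Fin n → ℝ → ℝ)
    (hdiff : ∀ i, Differentiable ℝ (h i))
    (lam : ℝ) (hlam : 0 ≤ lam)
    (q : ℝ) (hq : 1 < q)
    (L : (Fin p → ℝ) → ℝ)
    (hL : ∀ β : Fin p → ℝ,
      L β = (1 / (n : ℝ)) * ∑ i, (h i (∑ j, φ i j * β j) - ∑ j, m i j * β j)
            + (lam / q) * ∑ j, |β j| ^ q)
    (βhat : Fin p → ℝ)
    (hmin : ∀ β : Fin p → ℝ, L βhat ≤ L β)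
    (αhat : Fin n → ℝ)
    (hαhat : ∀ i, αhat i = deriv (h i) (∑ j, φ i j * βhat j)) :
    ∀ j : Fin p,
      (1 / (n : ℝ)) * ∑ i, (αhat i * φ i j - m i j)
        = -lam * Real.sign (βhat j) * |βhat j| ^ (q - 1) ∧
      |(1 / (n : ℝ)) * ∑ i, (αhat i * φ i j - m i j)|
        = lam * |βhat j| ^ (q - 1) := by
  intro j
  have hline : HasDerivAt (fun t => L (update βhat j t))
      ((1 / (n : ℝ)) * ∑ i, (αhat i * φ i j - m i j)
        + lam / q * (q * Real.sign (βhat j) * |βhat j| ^ (q - 1))) (βhat j) := by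
    simp only [hL, hαhat]
    have hdata := hasDerivAt_sum_sub_sum_update h φ m βhat j fun i => (hdiff i).differentiableAt
    have hpen := hasDerivAt_sum_comp_update (fun _ s => |s| ^ q) βhat j
      (hasDerivAt_abs_rpow_sign hq (βhat j))
    exact (hdata.const_mul _).add (hpen.const_mul _)
  have hbal : (1 / (n : ℝ)) * ∑ i, (αhat i * φ i j - m i j)
      = -lam * Real.sign (βhat j) * |βhat j| ^ (q - 1) := by
    have hcrit := hasDerivAt_update_eq_zero_of_forall_le hmin hline
    have hpen_coeff : lam / q * (q * Real.sign (βhat j) * |βhat j| ^ (q - 1))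
        = lam * Real.sign (βhat j) * |βhat j| ^ (q - 1) := by
      field_simp
    linarith
  refine ⟨hbal, ?_⟩
  rw [hbal, mul_assoc, abs_mul, abs_neg, abs_of_nonneg hlam, abs_sign_mul_abs_rpow (by linarith)]

/-- Automatic regressor balancing with ℓ^q penalty, `q > 1`: the sample moment
imbalance in coordinate `j` equals `−λ · sign(β̂ⱼ) · |β̂ⱼ|^(q−1)`, and in absolute
value equals `λ · |β̂ⱼ|^(q−1)`. -/
theorem arb_lq_balancing
    (n p : ℕ) (hn : 0 < n) (hp : 0 < p)
    (φ m : Fin n → Fin p → ℝ)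
    (h : Fin n → ℝ → ℝ)
    (hconv : ∀ i, ConvexOn ℝ Set.univ (h i))
    (hdiff : ∀ i, Differentiable ℝ (h i))
    (lam : ℝ) (hlam : 0 ≤ lam)
    (q : ℝ) (hq : 1 < q)
    (L : (Fin p → ℝ) → ℝ)
    (hL : ∀ β : Fin p → ℝ,
      L β = (1 / (n : ℝ)) * ∑ i, (h i (∑ j, φ i j * β j) - ∑ j, m i j * β j)
            + (lam / q) * ∑ j, |β j| ^ q)
    (βhat : Fin p → ℝ)
    (hmin : ∀ β : Fin p → ℝ, L βhat ≤ L β)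
    (αhat : Fin n → ℝ)
    (hαhat : ∀ i, αhat i = deriv (h i) (∑ j, φ i j * βhat j)) :
    ∀ j : Fin p,
      (1 / (n : ℝ)) * ∑ i, (αhat i * φ i j - m i j)
        = -lam * Real.sign (βhat j) * |βhat j| ^ (q - 1) ∧
      |(1 / (n : ℝ)) * ∑ i, (αhat i * φ i j - m i j)|
        = lam * |βhat j| ^ (q - 1) :=
  arb_lq_balancing_general n p φ m h hdiff lam hlam q hq L hL βhat hmin αhat hαhat
end

section
/- Let (Ω, 𝔽, μ) be a probability space, 𝒳 a measurable space, X : Ω → 𝒳 measurable, and let α, α₀ : 𝒳 → ℝ be measurable. Let g : 𝒳 × ℝ → ℝ be such that for each x the map t ↦ g(x, t) is differentiable with derivative ∂g(x, t), and define the pointwise Bregman divergence BD_g(a ‖ b)(x) = g(x, a) − g(x, b) − ∂g(x, b)·(a − b). Suppose M : Ω → ℝ is integrable and satisfies the Riesz representation hypothesis ∫ M dμ = ∫ α₀(X)·∂g(X, α(X)) dμ, and suppose all terms below are integrable. Then the population Bregman-Riesz objective satisfies ∫ ( −g(X, α(X)) + ∂g(X, α(X))·α(X) − M ) dμ = ∫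 BD_g(α₀(X) ‖ α(X))(X) dμ − ∫ g(X, α₀(X)) dμ. That is, the population objective of generalized Riesz regression equals the expected Bregman divergence from the true Riesz representer α₀ to the candidate α, minus a constant not depending on α. -/
open MeasureTheory

/-- The population Bregman-Riesz objective equals the expected Bregman divergence
from the true Riesz representer `α₀` to the candidate `α`, minus a constant not
depending on `α`. -/
theorem population_bregman_riesz_decomposition
    {Ω : Type*} [MeasurableSpace Ω] (μ : Measure Ω) [IsProbabilityMeasure μ]
    {𝒳 : Type*} [MeasurableSpace 𝒳]
    (X : Ω → 𝒳) (hX : Measurable X)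
    (α α₀ : 𝒳 → ℝ) (hα : Measurable α) (hα₀ : Measurable α₀)
    (g dg : 𝒳 → ℝ → ℝ)
    (hderiv : ∀ x : 𝒳, ∀ t : ℝ, HasDerivAt (g x) (dg x t) t)
    (M : Ω → ℝ) (hM : Integrable M μ)
    (hriesz : ∫ ω, M ω ∂μ = ∫ ω, α₀ (X ω) * dg (X ω) (α (X ω)) ∂μ)
    (hint1 : Integrable (fun ω => g (X ω) (α (X ω))) μ)
    (hint2 : Integrable (fun ω => dg (X ω) (α (X ω)) * α (X ω)) μ)
    (hint3 : Integrable (fun ω => g (X ω) (α₀ (X ω))) μ)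
    (hint4 : Integrable (fun ω => α₀ (X ω) * dg (X ω) (α (X ω))) μ) :
    ∫ ω, (-g (X ω) (α (X ω)) + dg (X ω) (α (X ω)) * α (X ω) - M ω) ∂μ
      = ∫ ω, (g (X ω) (α₀ (X ω)) - g (X ω) (α (X ω))
              - dg (X ω) (α (X ω)) * (α₀ (X ω) - α (X ω))) ∂μ
        - ∫ ω, g (X ω) (α₀ (X ω)) ∂μ := by

  have e1 : ∀ ω, (-g (X ω) (α (X ω)) + dg (X ω) (α (X ω)) * α (X ω) - M ω)
      = (dg (X ω) (α (X ω)) * α (X ω) - g (X ω) (α (X ω))) - M ω := by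
    intro ω; ring
  have e2 : ∀ ω, (g (X ω) (α₀ (X ω)) - g (X ω) (α (X ω))
              - dg (X ω) (α (X ω)) * (α₀ (X ω) - α (X ω)))
      = g (X ω) (α₀ (X ω)) + ((dg (X ω) (α (X ω)) * α (X ω) - g (X ω) (α (X ω)))
          - α₀ (X ω) * dg (X ω) (α (X ω))) := by
    intro ω; ring
  simp only [e1, e2]
  have A : ∫ ω, ((dg (X ω) (α (X ω)) * α (X ω) - g (X ω) (α (X ω))) - M ω) ∂μ
      = ∫ ω, (dg (X ω) (α (X ω)) * α (X ω) - g (X ω) (α (X ω))) ∂μ - ∫ ω, M ω ∂μ :=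
    integral_sub (hint2.sub hint1) hM
  have B : ∫ ω, (g (X ω) (α₀ (X ω)) + ((dg (X ω) (α (X ω)) * α (X ω) - g (X ω) (α (X ω)))
          - α₀ (X ω) * dg (X ω) (α (X ω)))) ∂μ
      = ∫ ω, g (X ω) (α₀ (X ω)) ∂μ
        + ∫ ω, ((dg (X ω) (α (X ω)) * α (X ω) - g (X ω) (α (X ω)))
            - α₀ (X ω) * dg (X ω) (α (X ω))) ∂μ :=
    integral_add hint3 ((hint2.sub hint1).sub hint4)
  have C : ∫ ω, ((dg (X ω) (α (X ω)) * α (X ω) - g (X ω) (α (X ω)))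
          - α₀ (X ω) * dg (X ω) (α (X ω))) ∂μ
      = ∫ ω, (dg (X ω) (α (X ω)) * α (X ω) - g (X ω) (α (X ω))) ∂μ
        - ∫ ω, α₀ (X ω) * dg (X ω) (α (X ω)) ∂μ :=
    integral_sub (hint2.sub hint1) hint4
  rw [A, B, C, hriesz]
  ring
end

section
/- Let (Ω, 𝔽, μ) be a probability space, 𝒳 a measurable space, X : Ω → 𝒳 measurable, and Y : Ω → ℝ integrable. Let γ₀, γ̄, α₀, ᾱ : 𝒳 → ℝ be bounded measurable functions such that γ₀ ∘ X is a version of the conditional expectation of Y given the σ-algebra generated by X. Then the product-bias identity holds: ∫ ( α₀(X)·γ̄(X) + ᾱ(X)·(Y − γ̄(X)) ) dμ − ∫ α₀(X)·γ₀(X) dμ = − ∫ (ᾱ(X) − α₀(X))·(γ̄(X) − γ₀(X)) dμ. That is, the bias of the augmented Riesz weighting (doubly robust) score evaluated at nuisance estimates (γ̄, ᾱ) equals minus the expected product of the representer error and the regression error. -/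
/-! The score bias minus the product term is pointwise `ᾱ(X) (Y - γ₀(X))`, whose mean vanishes
because the regression residual `Y - E[Y | X]` is orthogonal to every bounded function of `X`. -/

open MeasureTheory
open scoped ENNReal

theorem memLp_top_comp_of_abs_le {Ω 𝒳 : Type*} [MeasurableSpace Ω] [MeasurableSpace 𝒳]
    {μ : Measure Ω} {X : Ω → 𝒳} (hX : Measurable X) {a : 𝒳 → ℝ} (ha : Measurable a)
    (hab : ∃ C, ∀ x, |a x| ≤ C) :
    MemLp (fun ω => a (X ω)) ∞ μ :=
  let ⟨C, hC⟩ := hab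
  memLp_top_of_bound (ha.comp hX).aestronglyMeasurable C
    (ae_of_all _ fun ω => (Real.norm_eq_abs _).trans_le (hC (X ω)))

theorem integral_mul_sub_condExp_eq_zero {Ω : Type*} {m mΩ : MeasurableSpace Ω} {μ : Measure Ω}
    (hm : m ≤ mΩ) [SigmaFinite (μ.trim hm)] {f g : Ω → ℝ}
    (hfm : AEStronglyMeasurable[m] f μ) (hf : MemLp f ∞ μ) (hg : Integrable g μ) :
    ∫ ω, f ω * (g ω - μ[g | m] ω) ∂μ = 0 := by
  have hfg : Integrable (f * g) μ := hg.mul_of_top_right hf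
  have hfcond : Integrable (f * μ[g | m]) μ := integrable_condExp.mul_of_top_right hf
  calc ∫ ω, f ω * (g ω - μ[g | m] ω) ∂μ
      = ∫ ω, (f * g) ω ∂μ - ∫ ω, (f * μ[g | m]) ω ∂μ := by
        simp only [mul_sub]; exact integral_sub hfg hfcond
    _ = ∫ ω, μ[f * g | m] ω ∂μ - ∫ ω, (f * μ[g | m]) ω ∂μ := by rw [integral_condExp hm]
    _ = 0 := by rw [integral_congr_ae (condExp_mul_of_aestronglyMeasurable_left hfm hfg hg), sub_self]

theorem product_bias_identity_general
    {Ω : Type*} [MeasurableSpace Ω] (μ : Measure Ω) [IsProbabilityMeasure μ]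
    {𝒳 : Type*} [MeasurableSpace 𝒳]
    (X : Ω → 𝒳) (hX : Measurable X)
    (Y : Ω → ℝ) (hY : Integrable Y μ)
    (γ₀ γbar α₀ αbar : 𝒳 → ℝ)
    (hγbar : Measurable γbar)
    (hα₀ : Measurable α₀) (hαbar : Measurable αbar)
    (hγbarb : ∃ Cγ : ℝ, ∀ x, |γbar x| ≤ Cγ)
    (hα₀b : ∃ Cα₀ : ℝ, ∀ x, |α₀ x| ≤ Cα₀)
    (hαbarb : ∃ Cα : ℝ, ∀ x, |αbar x| ≤ Cα)
    (hcond : (fun ω => γ₀ (X ω)) =ᵐ[μ] μ[Y | MeasurableSpace.comap X inferInstance]) :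
    ∫ ω, (α₀ (X ω) * γbar (X ω) + αbar (X ω) * (Y ω - γbar (X ω))) ∂μ
      - ∫ ω, α₀ (X ω) * γ₀ (X ω) ∂μ
      = - ∫ ω, (αbar (X ω) - α₀ (X ω)) * (γbar (X ω) - γ₀ (X ω)) ∂μ := by
  have hA₀ : MemLp (fun ω => α₀ (X ω)) ∞ μ := memLp_top_comp_of_abs_le hX hα₀ hα₀b
  have hA : MemLp (fun ω => αbar (X ω)) ∞ μ := memLp_top_comp_of_abs_le hX hαbar hαbarb
  have hG : Integrable (fun ω => γbar (X ω)) μ :=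
    (memLp_top_comp_of_abs_le hX hγbar hγbarb).integrable le_top
  have hG₀ : Integrable (fun ω => γ₀ (X ω)) μ := integrable_condExp.congr hcond.symm
  have hscore : Integrable (fun ω => α₀ (X ω) * γbar (X ω) + αbar (X ω) * (Y ω - γbar (X ω))) μ :=
    (hG.mul_of_top_right hA₀).add ((hY.sub hG).mul_of_top_right hA)
  have hA₀G₀ : Integrable (fun ω => α₀ (X ω) * γ₀ (X ω)) μ := hG₀.mul_of_top_right hA₀
  have hproduct : Integrable (fun ω => (αbar (X ω) - α₀ (X ω)) * (γbar (X ω) - γ₀ (X ω))) μ :=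
    (hG.sub hG₀).mul_of_top_right (hA.sub hA₀)
  have hresidual : ∫ ω, αbar (X ω) * (Y ω - γ₀ (X ω)) ∂μ = 0 := by
    rw [← integral_mul_sub_condExp_eq_zero hX.comap_le
      (hαbar.comp (comap_measurable X)).aestronglyMeasurable hA hY]
    refine integral_congr_ae ?_
    filter_upwards [hcond] with ω hω
    rw [hω]; rfl
  rw [eq_neg_iff_add_eq_zero, ← hresidual, ← integral_sub hscore hA₀G₀]
  exact (integral_add (hscore.sub hA₀G₀) hproduct).symm.trans
    (integral_congr_ae (ae_of_all _ fun ω => by simp only [Pi.sub_apply]; ring))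

/-- Product-bias identity: the bias of the augmented Riesz weighting (doubly
robust) score at nuisance estimates `(γ̄, ᾱ)` equals minus the expected product
of the representer error and the regression error. -/
theorem product_bias_identity
    {Ω : Type*} [MeasurableSpace Ω] (μ : Measure Ω) [IsProbabilityMeasure μ]
    {𝒳 : Type*} [MeasurableSpace 𝒳]
    (X : Ω → 𝒳) (hX : Measurable X)
    (Y : Ω → ℝ) (hY : Integrable Y μ)
    (γ₀ γbar α₀ αbar : 𝒳 → ℝ)
    (hγ₀ : Measurable γ₀) (hγbar : Measurable γbar)
    (hα₀ : Measurable α₀) (hαbar : Measurable αbar)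
    (hγ₀b : ∃ Cγ₀ : ℝ, ∀ x, |γ₀ x| ≤ Cγ₀)
    (hγbarb : ∃ Cγ : ℝ, ∀ x, |γbar x| ≤ Cγ)
    (hα₀b : ∃ Cα₀ : ℝ, ∀ x, |α₀ x| ≤ Cα₀)
    (hαbarb : ∃ Cα : ℝ, ∀ x, |αbar x| ≤ Cα)
    (hcond : (fun ω => γ₀ (X ω)) =ᵐ[μ] μ[Y | MeasurableSpace.comap X inferInstance]) :
    ∫ ω, (α₀ (X ω) * γbar (X ω) + αbar (X ω) * (Y ω - γbar (X ω))) ∂μ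
      - ∫ ω, α₀ (X ω) * γ₀ (X ω) ∂μ
      = - ∫ ω, (αbar (X ω) - α₀ (X ω)) * (γbar (X ω) - γ₀ (X ω)) ∂μ :=
  product_bias_identity_general μ X hX Y hY γ₀ γbar α₀ αbar hγbar hα₀ hαbar hγbarb hα₀b hαbarb hcond
end

section
/- Let (Ω, 𝔽, μ) be a probability space, 𝒵 a measurable space, Z : Ω → 𝒵 measurable, and D : Ω → ℝ measurable with D(ω) ∈ {0, 1} for all ω and π₁ := ∫ D dμ > 0. Let e : 𝒵 → ℝ be measurable with 0 ≤ e(z) ≤ 1 − ε for some ε > 0, and suppose e ∘ Z is a version of the conditional expectation of D given the σ-algebra generated by Z. Define the ATT Riesz representer α₀(d, z) = (1/π₁)·( d − (1 − d)·e(z)/(1 − e(z)) ). Then for every bounded measurable γ : ℝ × 𝒵 → ℝ, ∫ (D/π₁)·( γ(1, Z) − γ(0, Z) ) dμ = ∫ α₀(D, Z)·γ(D, Z) dμ. That is, α₀ is a Riesz representer for the ATT linear functional m(W, γ) = (D/π₁)·(γ(1, Z) − γ(0, Z)). -/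
open MeasureTheory

/-- The weights `α₀(d, z) = (1/π₁)·(d − (1 − d)·e(z)/(1 − e(z)))` form a Riesz
representer for the ATT linear functional
`m(W, γ) = (D/π₁)·(γ(1, Z) − γ(0, Z))` with `π₁ = E[D]`. -/
theorem att_riesz_representer
    {Ω : Type*} [MeasurableSpace Ω] (μ : Measure Ω) [IsProbabilityMeasure μ]
    {𝒵 : Type*} [MeasurableSpace 𝒵]
    (Z : Ω → 𝒵) (hZ : Measurable Z)
    (D : Ω → ℝ) (hD : Measurable D)
    (hDbin : ∀ ω, D ω = 0 ∨ D ω = 1)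
    (π₁ : ℝ) (hπ₁ : π₁ = ∫ ω, D ω ∂μ) (hπ₁pos : 0 < π₁)
    (e : 𝒵 → ℝ) (he : Measurable e)
    (ε : ℝ) (hε : 0 < ε)
    (hrange : ∀ z, 0 ≤ e z ∧ e z ≤ 1 - ε)
    (hcond : (fun ω => e (Z ω)) =ᵐ[μ] μ[D | MeasurableSpace.comap Z inferInstance])
    (α₀ : ℝ → 𝒵 → ℝ)
    (hα₀ : ∀ d z, α₀ d z = (1 / π₁) * (d - (1 - d) * e z / (1 - e z))) :
    ∀ γ : ℝ × 𝒵 → ℝ, Measurable γ → (∃ C : ℝ, ∀ p, |γ p| ≤ C) →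
      ∫ ω, (D ω / π₁) * (γ (1, Z ω) - γ (0, Z ω)) ∂μ
        = ∫ ω, α₀ (D ω) (Z ω) * γ (D ω, Z ω) ∂μ := by
  intro γ hγ hγbd
  obtain ⟨C, hC⟩ := hγbd
  have hC' : ∀ p, |γ p| ≤ |C| := fun p => (hC p).trans (le_abs_self C)
  -- basic facts about e
  have hεe : ∀ z, ε ≤ 1 - e z := fun z => by
    have := (hrange z).2; linarith
  have hene : ∀ z, (1 : ℝ) - e z ≠ 0 := fun z => by
    have h := hεe z
    have h2 : (0:ℝ) < 1 - e z := by linarith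
    exact h2.ne'
  have heabs : ∀ z, |e z| ≤ 1 := fun z => by
    rw [abs_le]; constructor
    · linarith [(hrange z).1]
    · have := (hrange z).2; linarith
  -- integrability of bounded measurable functions
  have bint : ∀ (h : Ω → ℝ), Measurable h → ∀ (B : ℝ), (∀ ω, |h ω| ≤ B) →
      Integrable h μ := by
    intro h hh B hB
    exact ⟨hh.aestronglyMeasurable,
      HasFiniteIntegral.of_bounded (C := B) (ae_of_all _ fun ω => by
        simpa [Real.norm_eq_abs] using hB ω)⟩
  have hDabs : ∀ ω, |D ω| ≤ 1 := fun ω => by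
    rcases hDbin ω with h | h <;> simp [h]
  have hDint : Integrable D μ := bint D hD 1 hDabs
  -- the auxiliary function f
  set f : 𝒵 → ℝ := fun z => γ (0, z) / (1 - e z) with hf
  have hfm : Measurable f := (hγ.comp (measurable_const.prodMk measurable_id)).div
    (measurable_const.sub he)
  have hfabs : ∀ z, |f z| ≤ |C| / ε := by
    intro z
    rw [hf, abs_div, abs_of_pos (by have := hεe z; linarith : (0:ℝ) < 1 - e z)]
    exact div_le_div₀ (abs_nonneg C) (hC' _) hε (hεe z)
  -- key identity: ∫ f(Z) * D = ∫ f(Z) * e(Z), via conditional expectation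
  have hm : MeasurableSpace.comap Z inferInstance ≤ ‹MeasurableSpace Ω› := hZ.comap_le
  have hfZm : StronglyMeasurable[MeasurableSpace.comap Z inferInstance] (fun ω => f (Z ω)) :=
    (hfm.comp (comap_measurable Z)).stronglyMeasurable
  have hfZD : Integrable (fun ω => f (Z ω) * D ω) μ := by
    refine bint _ ((hfm.comp hZ).mul hD) (|C| / ε) fun ω => ?_
    rw [abs_mul]
    calc |f (Z ω)| * |D ω| ≤ (|C| / ε) * 1 :=
          mul_le_mul (hfabs _) (hDabs ω) (abs_nonneg _) (by positivity)
      _ = |C| / ε := mul_one _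
  have key : ∫ ω, f (Z ω) * D ω ∂μ = ∫ ω, f (Z ω) * e (Z ω) ∂μ := by
    have hpull := condExp_mul_of_stronglyMeasurable_left (μ := μ) hfZm hfZD hDint
    calc ∫ ω, f (Z ω) * D ω ∂μ
        = ∫ ω, (μ[(fun ω => f (Z ω)) * D | MeasurableSpace.comap Z inferInstance]) ω ∂μ :=
          (integral_condExp hm).symm
      _ = ∫ ω, f (Z ω) * (μ[D | MeasurableSpace.comap Z inferInstance]) ω ∂μ :=
          integral_congr_ae (hpull.mono fun ω hω => by simpa using hω)
      _ = ∫ ω, f (Z ω) * e (Z ω) ∂μ :=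
          integral_congr_ae (by filter_upwards [hcond] with ω hω; rw [← hω])
  -- pointwise decomposition of the RHS integrand
  have hpt : ∀ ω, α₀ (D ω) (Z ω) * γ (D ω, Z ω)
      = (D ω / π₁) * (γ (1, Z ω) - γ (0, Z ω))
        + (1 / π₁) * (f (Z ω) * D ω - f (Z ω) * e (Z ω)) := by
    intro ω
    have hne := hene (Z ω)
    rcases hDbin ω with h | h <;>
      · rw [h, hα₀, hf]
        field_simp
        ring
  -- integrability of the pieces
  have hI1 : Integrable (fun ω => (D ω / π₁) * (γ (1, Z ω) - γ (0, Z ω))) μ := by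
    refine bint _ ((hD.div_const _).mul
      ((hγ.comp (measurable_const.prodMk hZ)).sub
        (hγ.comp (measurable_const.prodMk hZ)))) ((1 / π₁) * (2 * |C|)) fun ω => ?_
    rw [abs_mul]
    refine mul_le_mul ?_ ?_ (abs_nonneg _) (by positivity)
    · rw [abs_div, abs_of_pos hπ₁pos]
      gcongr
      exact hDabs ω
    · calc |γ (1, Z ω) - γ (0, Z ω)| ≤ |γ (1, Z ω)| + |γ (0, Z ω)| := abs_sub _ _
        _ ≤ 2 * |C| := by linarith [hC' (1, Z ω), hC' (0, Z ω)]
  have hfZe : Integrable (fun ω => f (Z ω) * e (Z ω)) μ := by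
    refine bint _ ((hfm.comp hZ).mul (he.comp hZ)) (|C| / ε) fun ω => ?_
    rw [abs_mul]
    calc |f (Z ω)| * |e (Z ω)| ≤ (|C| / ε) * 1 :=
          mul_le_mul (hfabs _) (heabs _) (abs_nonneg _) (by positivity)
      _ = |C| / ε := mul_one _
  -- put everything together
  calc ∫ ω, (D ω / π₁) * (γ (1, Z ω) - γ (0, Z ω)) ∂μ
      = ∫ ω, (D ω / π₁) * (γ (1, Z ω) - γ (0, Z ω)) ∂μ
        + (1 / π₁) * (∫ ω, f (Z ω) * D ω ∂μ - ∫ ω, f (Z ω) * e (Z ω) ∂μ) := by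
        rw [key]; ring
    _ = ∫ ω, (D ω / π₁) * (γ (1, Z ω) - γ (0, Z ω))
          + (1 / π₁) * (f (Z ω) * D ω - f (Z ω) * e (Z ω)) ∂μ := by
        have hg : Integrable (fun ω => (1 / π₁) * (f (Z ω) * D ω - f (Z ω) * e (Z ω))) μ := by
          exact ((hfZD.sub hfZe)).const_mul _
        rw [integral_add hI1 hg, integral_const_mul _ _, integral_sub hfZD hfZe]
    _ = ∫ ω, α₀ (D ω) (Z ω) * γ (D ω, Z ω) ∂μ :=
        (integral_congr_ae (ae_of_all _ fun ω => hpt ω)).symm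
end
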